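/- Fix m ∈ ℕ, constants C ≥ 0, a > 0, L > 0, and let (μ_t)_{t ∈ [0,∞)} be a family of measures on the Euclidean space ℝ^m such that μ_t(ℝ^m) ≤ a for every t ≥ 0, and such that the following Gaussian monotonicity with force constant C holds: for every x₀ ∈ ℝ^m, every t₀, and all times 0 ≤ t₁ ≤ t₂ < t₀, one has ∫⁻ ρ_{x₀,t₀}(x, t₂) dμ_{t₂}(x) ≤ e^{C(t₂−t₁)} ∫⁻ ρ_{x₀,t₀}(x, t₁) dμ_{t₁}(x). Then there exists a constant D > 0, depending only on C, a and L, such that for every t > 1, every x₀ ∈ ℝ^m, and every radius R with 0 < R ≤ L, one has μ_t(closedBall(x₀, R)) ≤ D · π · R². -/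

import Mathlib

open MeasureTheory Metric Real Set

/-- The 2-dimensional backward heat kernel centered at `(x₀, t₀)`, evaluated on
points of Euclidean `ℝ^m`. -/
noncomputable def backwardHeatKernel {m : ℕ} (x₀ : EuclideanSpace ℝ (Fin m))
    (t₀ : ℝ) (x : EuclideanSpace ℝ (Fin m)) (t : ℝ) : ℝ :=
  (4 * π * (t₀ - t))⁻¹ * Real.exp (-(‖x - x₀‖ ^ 2) / (4 * (t₀ - t)))

/-- Uniform quadratic area growth for large times, from the Gaussian
monotonicity formula with force constant `C` and a uniform mass bound `a`. -/
theorem area_growth_of_gaussian_monotonicity (m : ℕ) (C a L : ℝ)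
    (hC : 0 ≤ C) (ha : 0 < a) (hL : 0 < L)
    (μ : ℝ → Measure (EuclideanSpace ℝ (Fin m)))
    (hmass : ∀ t : ℝ, 0 ≤ t → μ t Set.univ ≤ ENNReal.ofReal a)
    (hmono : ∀ (x₀ : EuclideanSpace ℝ (Fin m)) (t₀ t₁ t₂ : ℝ),
      0 ≤ t₁ → t₁ ≤ t₂ → t₂ < t₀ →
      ∫⁻ x, ENNReal.ofReal (backwardHeatKernel x₀ t₀ x t₂) ∂(μ t₂) ≤
        ENNReal.ofReal (Real.exp (C * (t₂ - t₁))) *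
          ∫⁻ x, ENNReal.ofReal (backwardHeatKernel x₀ t₀ x t₁) ∂(μ t₁)) :
    ∃ D : ℝ, 0 < D ∧ ∀ t : ℝ, 1 < t → ∀ (x₀ : EuclideanSpace ℝ (Fin m)) (R : ℝ),
      0 < R → R ≤ L → μ t (closedBall x₀ R) ≤ ENNReal.ofReal (D * π * R ^ 2) := by
  have hπ : (0:ℝ) < π := Real.pi_pos
  refine ⟨Real.exp (C + 1/4) * a / π, by positivity, ?_⟩
  intro t ht x₀ R hR hRL
  set t₀ := t + R ^ 2 with ht₀
  have h0 : (0:ℝ) ≤ t - 1 := by linarith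
  have h1 : t - 1 ≤ t := by linarith
  have h2 : t < t₀ := by nlinarith
  have hmono' := hmono x₀ t₀ (t - 1) t h0 h1 h2
  set c : ℝ := (4 * π * R ^ 2)⁻¹ * Real.exp (-(1:ℝ)/4) with hc
  have hcpos : 0 < c := by positivity
  -- lower bound on the gaussian integral at time t
  have hlow : ENNReal.ofReal c * μ t (closedBall x₀ R) ≤
      ∫⁻ x, ENNReal.ofReal (backwardHeatKernel x₀ t₀ x t) ∂(μ t) := by
    calc ENNReal.ofReal c * μ t (closedBall x₀ R)
        = ∫⁻ _x in closedBall x₀ R, ENNReal.ofReal c ∂(μ t) := by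
          rw [setLIntegral_const, mul_comm]
      _ ≤ ∫⁻ x in closedBall x₀ R, ENNReal.ofReal (backwardHeatKernel x₀ t₀ x t) ∂(μ t) := by
          apply setLIntegral_mono' measurableSet_closedBall
          intro x hx
          apply ENNReal.ofReal_le_ofReal
          unfold backwardHeatKernel
          have hts : t₀ - t = R ^ 2 := by rw [ht₀]; ring
          rw [hts, hc]
          have hxd : ‖x - x₀‖ ≤ R := by
            have := mem_closedBall.mp hx
            rwa [dist_eq_norm] at this
          have hx2 : ‖x - x₀‖ ^ 2 ≤ R ^ 2 := by
            have h0n : (0:ℝ) ≤ ‖x - x₀‖ := norm_nonneg _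
            nlinarith
          apply mul_le_mul_of_nonneg_left _ (by positivity)
          apply Real.exp_le_exp.mpr
          rw [div_le_div_iff₀ (by norm_num) (by positivity)]
          nlinarith
      _ ≤ _ := setLIntegral_le_lintegral _ _
  -- upper bound on the gaussian integral at time t - 1
  have hup : ∫⁻ x, ENNReal.ofReal (backwardHeatKernel x₀ t₀ x (t-1)) ∂(μ (t-1)) ≤
      ENNReal.ofReal ((4 * π)⁻¹ * a) := by
    calc ∫⁻ x, ENNReal.ofReal (backwardHeatKernel x₀ t₀ x (t-1)) ∂(μ (t-1))
        ≤ ∫⁻ _x, ENNReal.ofReal ((4 * π)⁻¹) ∂(μ (t-1)) := by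
          apply lintegral_mono
          intro x
          apply ENNReal.ofReal_le_ofReal
          unfold backwardHeatKernel
          have hts : t₀ - (t - 1) = R ^ 2 + 1 := by rw [ht₀]; ring
          rw [hts]
          have h1' : (0:ℝ) < R ^ 2 + 1 := by positivity
          calc (4 * π * (R ^ 2 + 1))⁻¹ * Real.exp (-(‖x - x₀‖ ^ 2) / (4 * (R ^ 2 + 1)))
              ≤ (4 * π * (R ^ 2 + 1))⁻¹ * 1 := by
                apply mul_le_mul_of_nonneg_left _ (by positivity)
                apply Real.exp_le_one_iff.mpr
                apply div_nonpos_of_nonpos_of_nonneg (neg_nonpos.mpr (by positivity)) (by positivity)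
            _ ≤ (4 * π)⁻¹ := by
                rw [mul_one]
                apply inv_anti₀ (by positivity)
                nlinarith
      _ = ENNReal.ofReal ((4 * π)⁻¹) * μ (t-1) Set.univ := lintegral_const _
      _ ≤ ENNReal.ofReal ((4 * π)⁻¹) * ENNReal.ofReal a := by
          exact mul_le_mul_right (hmass (t-1) h0) _
      _ = ENNReal.ofReal ((4 * π)⁻¹ * a) := by
          rw [ENNReal.ofReal_mul (by positivity)]
  have key : ENNReal.ofReal c * μ t (closedBall x₀ R) ≤
      ENNReal.ofReal (Real.exp C * ((4 * π)⁻¹ * a)) := by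
    calc ENNReal.ofReal c * μ t (closedBall x₀ R)
        ≤ ENNReal.ofReal (Real.exp (C * (t - (t - 1)))) *
            ∫⁻ x, ENNReal.ofReal (backwardHeatKernel x₀ t₀ x (t-1)) ∂(μ (t-1)) :=
          le_trans hlow hmono'
      _ ≤ ENNReal.ofReal (Real.exp C) * ENNReal.ofReal ((4 * π)⁻¹ * a) := by
          have : C * (t - (t - 1)) = C := by ring
          rw [this]
          exact mul_le_mul_right hup _
      _ = ENNReal.ofReal (Real.exp C * ((4 * π)⁻¹ * a)) := by
          rw [ENNReal.ofReal_mul (Real.exp_nonneg _)]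
  have hcne : ENNReal.ofReal c ≠ 0 := by
    exact ne_of_gt (ENNReal.ofReal_pos.mpr hcpos)
  have hcnt : ENNReal.ofReal c ≠ ⊤ := ENNReal.ofReal_ne_top
  have := ENNReal.div_le_div_right key (ENNReal.ofReal c)
  rw [mul_comm, div_eq_mul_inv, mul_assoc, ENNReal.mul_inv_cancel hcne hcnt, mul_one] at this
  refine this.trans ?_
  rw [ENNReal.div_eq_inv_mul, ← ENNReal.ofReal_inv_of_pos hcpos,
    ← ENNReal.ofReal_mul (by positivity)]
  apply ENNReal.ofReal_le_ofReal
  have hneg : Real.exp (-1/4) = (Real.exp (1/4))⁻¹ := by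
    rw [← Real.exp_neg]; norm_num
  have hE : (0:ℝ) < Real.exp (1/4) := Real.exp_pos _
  rw [hc, Real.exp_add, hneg, mul_inv, inv_inv, inv_inv]
  field_simp
  ring_nf
  have hππ : π * π⁻¹ = 1 := mul_inv_cancel₀ hπ.ne'
  exact le_refl _
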